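/- Rectangular cumulant invariance under M_n: for any n > −1, 0 ≤ j ≤ d, and 1 ≤ k ≤ d−j, the (n, d−j)-rectangular finite free cumulants of (1/((d)_j (n+d)_j)) M_n^j p equal the (n,d)-rectangular finite free cumulants of p: K^{n,d−j}_{2k}[(1/((d)_j (n+d)_j)) M_n^j p] = K^{n,d}_{2k}[p]. -/

import Mathlib

open Polynomial Finset

/-- Falling factorial `(x)_j = x (x-1) ⋯ (x-j+1)` for a real `x`. -/
noncomputable def ffall (x : ℝ) (j : ℕ) : ℝ := ∏ i ∈ Finset.range j, (x - i)

/-- The differential operator `M_n = x D² + (n+1) D` on real polynomials. -/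
noncomputable def Mn (n : ℝ) (p : Polynomial ℝ) : Polynomial ℝ :=
  Polynomial.X * Polynomial.derivative (Polynomial.derivative p)
    + Polynomial.C (n + 1) * Polynomial.derivative p

/-- The coefficient sequence `a_k = (-1)^k ⬝ (coefficient of x^{d-k})` of a degree-`d`
polynomial. -/
noncomputable def coeffSeq (d : ℕ) (p : Polynomial ℝ) (k : ℕ) : ℝ :=
  (-1 : ℝ) ^ k * p.coeff (d - k)

/-- The `(n,d)`-rectangular finite free cumulant `K^{n,d}_{2k}[p]`, defined via a sum over
set partitions of `{1,…,k}`. -/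
noncomputable def rectCumulant (n : ℝ) (d : ℕ) (p : Polynomial ℝ) (k : ℕ) : ℝ :=
  ((-1 : ℝ) ^ k / ((k - 1).factorial : ℝ)) *
    ∑ π : Finpartition (Finset.univ : Finset (Fin k)),
      (-1 : ℝ) ^ (π.parts.card - 1) * ((π.parts.card - 1).factorial : ℝ) *
        (∏ V ∈ π.parts, ((V.card.factorial : ℝ) * coeffSeq d p V.card)) /
        (∏ V ∈ π.parts, (ffall (d : ℝ) V.card * ffall (n + d) V.card))

lemma ffall_succ' (x : ℝ) (j : ℕ) : ffall (x+1) (j+1) = ffall x j * (x + 1) := by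
  unfold ffall
  rw [Finset.prod_range_succ']
  simp only [Nat.cast_zero, sub_zero]
  congr 1
  apply Finset.prod_congr rfl
  intro i _
  push_cast
  ring

lemma ffall_pos {x : ℝ} {m : ℕ} (h : (m:ℝ) - 1 < x) : 0 < ffall x m := by
  unfold ffall
  apply Finset.prod_pos
  intro i hi
  rw [Finset.mem_range] at hi
  have : (i:ℝ) + 1 ≤ m := by exact_mod_cast hi
  linarith

lemma ffall_add (x : ℝ) (a b : ℕ) : ffall x (a+b) = ffall x a * ffall (x - a) b := by
  unfold ffall
  rw [Finset.prod_range_add]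
  congr 1
  apply Finset.prod_congr rfl
  intro i _
  push_cast
  ring

lemma Mn_coeff (n : ℝ) (p : Polynomial ℝ) (m : ℕ) :
    (Mn n p).coeff m = ((m+1:ℕ):ℝ) * (n + ((m+1:ℕ):ℝ)) * p.coeff (m+1) := by
  unfold Mn
  rcases m with _ | m
  · simp only [Polynomial.coeff_add, Polynomial.mul_coeff_zero, Polynomial.coeff_X_zero,
      Polynomial.coeff_C_mul, Polynomial.coeff_derivative, zero_mul, Polynomial.coeff_C_zero]
    push_cast
    ring
  · simp only [Polynomial.coeff_add, Polynomial.coeff_X_mul, Polynomial.coeff_C_mul,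
      Polynomial.coeff_derivative]
    push_cast
    ring

lemma Mn_iter_coeff (n : ℝ) (p : Polynomial ℝ) (j m : ℕ) :
    ((Mn n)^[j] p).coeff m
      = ffall ((m+j:ℕ):ℝ) j * ffall (n + ((m+j:ℕ):ℝ)) j * p.coeff (m+j) := by
  induction j generalizing p with
  | zero => simp [ffall]
  | succ j ih =>
    rw [Function.iterate_succ_apply, ih, Mn_coeff]
    have h1 : ((m + (j+1) : ℕ) : ℝ) = ((m + j : ℕ) : ℝ) + 1 := by push_cast; ring
    rw [h1, show n + (((m+j:ℕ):ℝ)+1) = (n + ((m+j:ℕ):ℝ)) + 1 from by ring,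
      ffall_succ', ffall_succ']
    have h3 : m + j + 1 = m + (j + 1) := by omega
    rw [h3]
    push_cast
    ring

lemma part_eq (n : ℝ) (hn : -1 < n) (d j : ℕ) (hj : j ≤ d) (p : Polynomial ℝ)
    (v : ℕ) (hv : v ≤ d - j) :
    (v.factorial : ℝ) *
        coeffSeq (d - j) (Polynomial.C (1 / (ffall (d : ℝ) j * ffall (n + d) j))
          * (Mn n)^[j] p) v /
        (ffall ((d - j : ℕ) : ℝ) v * ffall (n + ((d - j : ℕ) : ℝ)) v)
      = (v.factorial : ℝ) * coeffSeq d p v / (ffall (d : ℝ) v * ffall (n + d) v) := by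
  have hvj : v + j ≤ d := by omega
  have hmj : d - j - v + j = d - v := by omega
  -- coefficient computation
  unfold coeffSeq
  rw [Polynomial.coeff_C_mul, Mn_iter_coeff, hmj]
  -- cast lemmas
  have cdj : ((d - j : ℕ) : ℝ) = (d : ℝ) - j := by
    rw [Nat.cast_sub hj]
  have cdv : ((d - v : ℕ) : ℝ) = (d : ℝ) - v := by
    rw [Nat.cast_sub (by omega)]
  rw [cdj, cdv]
  -- nonvanishing
  have hA : ffall (d : ℝ) j ≠ 0 := by
    have : (j : ℝ) ≤ d := Nat.cast_le.2 hj
    exact ne_of_gt (ffall_pos (by linarith))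
  have hB : ffall (n + d) j ≠ 0 := by
    have : (j : ℝ) ≤ d := Nat.cast_le.2 hj
    exact ne_of_gt (ffall_pos (by linarith))
  have hvd : (v : ℝ) ≤ (d:ℝ) - j := by
    have := (Nat.cast_le (α := ℝ)).2 hv
    rw [cdj] at this; exact this
  have hE : ffall ((d:ℝ) - j) v ≠ 0 := ne_of_gt (ffall_pos (by linarith))
  have hF : ffall (n + ((d:ℝ) - j)) v ≠ 0 := ne_of_gt (ffall_pos (by linarith))
  have hG : ffall (d : ℝ) v ≠ 0 := ne_of_gt (ffall_pos (by linarith))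
  have hH : ffall (n + d) v ≠ 0 := ne_of_gt (ffall_pos (by linarith))
  have hC1 : ffall ((d:ℝ) - v) j ≠ 0 := by
    have : (j : ℝ) ≤ (d:ℝ) - v := by linarith
    exact ne_of_gt (ffall_pos (by linarith))
  have hD1 : ffall (n + ((d:ℝ) - v)) j ≠ 0 := by
    have : (j : ℝ) ≤ (d:ℝ) - v := by linarith
    exact ne_of_gt (ffall_pos (by linarith))
  -- the key splitting identities
  have key1 : ffall (d : ℝ) j * ffall ((d:ℝ) - j) v
      = ffall (d : ℝ) v * ffall ((d:ℝ) - v) j := by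
    rw [← ffall_add, ← ffall_add, Nat.add_comm]
  have key2 : ffall (n + d) j * ffall (n + ((d:ℝ) - j)) v
      = ffall (n + d) v * ffall (n + ((d:ℝ) - v)) j := by
    have e1 : n + ((d:ℝ) - j) = (n + d) - j := by ring
    have e2 : n + ((d:ℝ) - v) = (n + d) - v := by ring
    rw [e1, e2, ← ffall_add, ← ffall_add, Nat.add_comm]
  field_simp
  linear_combination
    (-p.coeff (d - v) * ffall (n + (d:ℝ)) j
        * ffall (n + ((d:ℝ) - j)) v) * key1 +
    (-p.coeff (d - v) * ffall (d:ℝ) v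
        * ffall ((d:ℝ) - v) j) * key2

theorem rect_cumulant_invariance (n : ℝ) (hn : -1 < n) (d j : ℕ) (hj : j ≤ d)
    (p : Polynomial ℝ) (hp : p.Monic) (hdeg : p.natDegree = d)
    (k : ℕ) (hk1 : 1 ≤ k) (hk2 : k ≤ d - j) :
    rectCumulant n (d - j)
        (Polynomial.C (1 / (ffall (d : ℝ) j * ffall (n + d) j)) * (Mn n)^[j] p) k
      = rectCumulant n d p k := by
  unfold rectCumulant
  congr 1
  apply Finset.sum_congr rfl
  intro π _
  rw [mul_div_assoc, mul_div_assoc]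
  congr 1
  rw [← Finset.prod_div_distrib, ← Finset.prod_div_distrib]
  apply Finset.prod_congr rfl
  intro V hV
  have hVcard : V.card ≤ d - j := by
    have h1 : V ⊆ (Finset.univ : Finset (Fin k)) := π.le hV
    have := Finset.card_le_card h1
    simp at this
    omega
  exact part_eq n hn d j hj p V.card hVcard
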